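/- arXiv:0712.1932 — 2 statements merged into one kernel-verified Lean document; each statement's English description precedes it below -/
import Mathlib

section
/- Let R be a commutative ring, let n ≥ 2, let M be an n × (n − 2) matrix over R, and let a, b, c, d be four column vectors in Rⁿ. Writing |M u v| for the determinant of the n × n matrix whose first n − 2 columns are those of M and whose last two columns are u and v, one has |M a b|·|M c d| − |M a c|·|M b d| + |M a d|·|M b c| = 0 (the three-term Plücker relation). -/
/-!
Cramer's rule writes `|M a c| • d` as a combination of the columns of `[M a c]`, the
coefficients of `a` and `c` being `|M d c|` and `|M a d|`. Applying the linear form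
`x ↦ |M x b|`, which kills every column of `M`, gives
`|M a c| |M d b| = |M d c| |M a b| + |M a d| |M c b|`, and antisymmetry of `|M · ·|`
turns this into the three-term relation.
-/

/-- The determinant of the `n × n` matrix whose first `n - 2` columns are those of `M`
and whose last two columns are `u` and `v`. -/
noncomputable def detWithTwoCols {R : Type*} [CommRing R] {n : ℕ} (hn : 2 ≤ n)
    (M : Matrix (Fin n) (Fin (n - 2)) R) (u v : Fin n → R) : R :=
  Matrix.det ((Matrix.fromCols M (Matrix.of fun i => ![u i, v i])).submatrix
    id (finSumFinEquiv.trans (finCongr (Nat.sub_add_cancel hn))).symm)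

namespace Matrix

variable {R : Type*} [CommRing R]

theorem det_mul_apply_eq_sum_cramer {n : Type*} [Fintype n] [DecidableEq n]
    (A : Matrix n n R) (L : (n → R) →ₗ[R] R) (d : n → R) :
    A.det * L d = ∑ j, cramer A d j * L (Aᵀ j) := by
  rw [← smul_eq_mul, ← L.map_smul, ← mulVec_cramer, mulVec_eq_sum, map_sum]
  simp only [op_smul_eq_smul, L.map_smul, smul_eq_mul]

section UpdateCol

variable {α κ ι : Type*} [DecidableEq κ] (M : Matrix ι κ α) (u v x : ι → α)

theorem updateCol_fromCols_inr_zero :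
    (fromCols M (of fun i => ![u i, v i])).updateCol (.inr 0) x
      = fromCols M (of fun i => ![x i, v i]) := by
  ext i (k | j)
  · simp
  · fin_cases j <;> simp

theorem updateCol_fromCols_inr_one :
    (fromCols M (of fun i => ![u i, v i])).updateCol (.inr 1) x
      = fromCols M (of fun i => ![u i, x i]) := by
  ext i (k | j)
  · simp
  · fin_cases j <;> simp

end UpdateCol

variable {κ : Type*} [Fintype κ] [DecidableEq κ]

/-- The paper's `|M u v|`, with the columns indexed by `κ ⊕ Fin 2`. -/
noncomputable def detAppend (M : Matrix (κ ⊕ Fin 2) κ R) (u v : κ ⊕ Fin 2 → R) : R :=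
  det (fromCols M (of fun i => ![u i, v i]))

variable (M : Matrix (κ ⊕ Fin 2) κ R)

theorem detAppend_swap (u v : κ ⊕ Fin 2 → R) : detAppend M v u = -detAppend M u v := by
  have hswap : fromCols M (of fun i => ![v i, u i])
      = (fromCols M (of fun i => ![u i, v i])).submatrix id (Equiv.swap (.inr 0) (.inr 1)) := by
    ext i (k | j)
    · simp [Equiv.swap_apply_of_ne_of_ne]
    · fin_cases j <;> simp
  rw [detAppend, hswap, det_permute', Equiv.Perm.sign_swap (by simp)]
  simp [detAppend]

theorem detAppend_col_eq_zero (k : κ) (v : κ ⊕ Fin 2 → R) : detAppend M (Mᵀ k) v = 0 :=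
  det_zero_of_column_eq (i := .inl k) (j := .inr 0) (by simp) (fun i => by simp)

noncomputable def detAppendLeft (v : κ ⊕ Fin 2 → R) : (κ ⊕ Fin 2 → R) →ₗ[R] R where
  toFun x := detAppend M x v
  map_add' x y := by
    simp only [detAppend]
    rw [← updateCol_fromCols_inr_zero M 0 v (x + y), det_updateCol_add,
      updateCol_fromCols_inr_zero, updateCol_fromCols_inr_zero]
  map_smul' r x := by
    simp only [detAppend]
    rw [← updateCol_fromCols_inr_zero M 0 v (r • x), det_updateCol_smul,
      updateCol_fromCols_inr_zero, smul_eq_mul, RingHom.id_apply]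

@[simp]
theorem detAppendLeft_apply (v x : κ ⊕ Fin 2 → R) : detAppendLeft M v x = detAppend M x v := rfl

theorem detAppend_exchange (a b c d : κ ⊕ Fin 2 → R) :
    detAppend M a c * detAppend M d b
      = detAppend M d c * detAppend M a b + detAppend M a d * detAppend M c b := by
  have h := det_mul_apply_eq_sum_cramer (fromCols M (of fun i => ![a i, c i]))
    (detAppendLeft M b) d
  have hM (k : κ) : (fromCols M (of fun i => ![a i, c i]))ᵀ (.inl k) = Mᵀ k := rfl
  have ha : (fromCols M (of fun i => ![a i, c i]))ᵀ (.inr 0) = a := rfl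
  have hc : (fromCols M (of fun i => ![a i, c i]))ᵀ (.inr 1) = c := rfl
  simp only [Fintype.sum_sum_type, Fin.sum_univ_two, cramer_apply, updateCol_fromCols_inr_zero,
    updateCol_fromCols_inr_one, detAppendLeft_apply, hM, ha, hc, detAppend_col_eq_zero, mul_zero,
    Finset.sum_const_zero, zero_add] at h
  exact h

theorem detAppend_plucker (a b c d : κ ⊕ Fin 2 → R) :
    detAppend M a b * detAppend M c d - detAppend M a c * detAppend M b d
      + detAppend M a d * detAppend M b c = 0 := by
  have h := detAppend_exchange M a b c d
  rw [detAppend_swap M b d, detAppend_swap M c d, detAppend_swap M b c] at h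
  linear_combination h

theorem det_fromCols_submatrix_equiv {ι : Type*} [Fintype ι] [DecidableEq ι]
    (e : ι ≃ κ ⊕ Fin 2) (M : Matrix ι κ R) (u v : ι → R) :
    det ((fromCols M (of fun i => ![u i, v i])).submatrix id e)
      = detAppend (M.submatrix e.symm id) (u ∘ e.symm) (v ∘ e.symm) := by
  rw [detAppend, ← det_submatrix_equiv_self e]
  congr 1
  ext i j
  rcases h : e j with k | t
  · simp [h]
  · fin_cases t <;> simp [h]

end Matrix

/-- The three-term Plücker relation for determinants. -/
theorem three_term_plucker_relation {R : Type*} [CommRing R] {n : ℕ} (hn : 2 ≤ n)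
    (M : Matrix (Fin n) (Fin (n - 2)) R) (a b c d : Fin n → R) :
    detWithTwoCols hn M a b * detWithTwoCols hn M c d
      - detWithTwoCols hn M a c * detWithTwoCols hn M b d
      + detWithTwoCols hn M a d * detWithTwoCols hn M b c = 0 := by
  simp only [detWithTwoCols, Matrix.det_fromCols_submatrix_equiv]
  exact Matrix.detAppend_plucker _ _ _ _ _
end

section
/- Let R be a commutative ring, let m ≥ 1, and let A be a 2m × 2m matrix over R that is alternating, i.e. Aᵀ = −A and all diagonal entries of A are zero. Then for any two distinct indices i and j, det(A^{ij}_{ij}) · det A = (det(A_{î ĵ}))², where A^{ij}_{ij} is the (2m − 2) × (2m − 2) matrix obtained from A by deleting rows i, j and columns i, j, and A_{î ĵ} is the (2m − 1) × (2m − 1) matrix obtained from A by deleting row i and column j. -/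
/-!
Jacobi's complementary minor identity gives
`det A * det A^{ij}_{ij} = adj(A)_ii * adj(A)_jj - adj(A)_ij * adj(A)_ji`.
For alternating `A` of even size the adjugate is again alternating: its transpose is
`adj(-A) = -adj A`, and its diagonal entries are, up to sign, determinants of alternating matrices
of odd size, which vanish. The right-hand side is therefore `adj(A)_ji ^ 2 = det(A_{î ĵ}) ^ 2`.
-/

open Matrix

/-- The determinant of the `(n - 1) × (n - 1)` matrix obtained from `A` by deleting
row `p` and column `q` (remaining indices in increasing order). -/
noncomputable def minor1 {R : Type*} [CommRing R] {n : ℕ}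
    (A : Matrix (Fin n) (Fin n) R) (p q : Fin n) : R :=
  Matrix.det (A.submatrix
    (fun t : Fin (n - 1) => ({p}ᶜ : Finset (Fin n)).orderEmbOfFin
      (by rw [Finset.card_compl, Finset.card_singleton, Fintype.card_fin]) t)
    (fun t : Fin (n - 1) => ({q}ᶜ : Finset (Fin n)).orderEmbOfFin
      (by rw [Finset.card_compl, Finset.card_singleton, Fintype.card_fin]) t))

/-- The determinant of the `(n - 2) × (n - 2)` matrix obtained from `A` by deleting
rows `i`, `j` and columns `i`, `j` (remaining indices in increasing order). -/
noncomputable def minor2 {R : Type*} [CommRing R] {n : ℕ}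
    (A : Matrix (Fin n) (Fin n) R) (i j p q : Fin n) (hij : i ≠ j) (hpq : p ≠ q) : R :=
  Matrix.det (A.submatrix
    (fun t : Fin (n - 2) => ({i, j}ᶜ : Finset (Fin n)).orderEmbOfFin
      (by rw [Finset.card_compl, Finset.card_pair hij, Fintype.card_fin]) t)
    (fun t : Fin (n - 2) => ({p, q}ᶜ : Finset (Fin n)).orderEmbOfFin
      (by rw [Finset.card_compl, Finset.card_pair hpq, Fintype.card_fin]) t))

section
variable {ι R : Type*} [Fintype ι] [DecidableEq ι] [CommRing R]

theorem det_eq_det_toSquareBlockProp_of_col_eq_one (M : Matrix ι ι R) (s : Finset ι)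
    (h : ∀ k l, l ∉ s → M k l = (1 : Matrix ι ι R) k l) :
    M.det = (M.toSquareBlockProp (· ∈ s)).det := by
  have hblock : M.toSquareBlockProp (· ∉ s) = 1 := by
    ext k l
    simp [toSquareBlockProp, toBlock, h k l l.2, one_apply, Subtype.ext_iff]
  have hM := twoBlockTriangular_det' M (· ∈ s) fun k hk l hl => by
    rw [h k l hl, one_apply_ne (by rintro rfl; exact hl hk)]
  rw [hM, hblock, det_one, mul_one]
  -- The two determinants differ only in the `Fintype` instance on the subtype.
  congr!

theorem det_updateCol_single_pair (A : Matrix ι ι R) {i j : ι} :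
    ((A.updateCol i (Pi.single i 1)).updateCol j (Pi.single j 1)).det =
      (A.toSquareBlockProp (· ∈ ({i, j} : Finset ι)ᶜ)).det := by
  have hblock : ((A.updateCol i (Pi.single i 1)).updateCol j (Pi.single j 1)).toSquareBlockProp
      (· ∈ ({i, j} : Finset ι)ᶜ) = A.toSquareBlockProp (· ∈ ({i, j} : Finset ι)ᶜ) := by
    ext k l
    have hl := Finset.mem_compl.mp l.2
    simp only [Finset.mem_insert, Finset.mem_singleton, not_or] at hl
    simp [toSquareBlockProp, toBlock, updateCol_ne hl.1, updateCol_ne hl.2]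
  rw [det_eq_det_toSquareBlockProp_of_col_eq_one _ {i, j}ᶜ, hblock]
  intro k l hl
  simp only [Finset.mem_compl, Finset.mem_insert, Finset.mem_singleton, not_not] at hl
  by_cases hlj : l = j
  · simp [hlj, Pi.single_apply, one_apply]
  · obtain rfl := hl.resolve_right hlj
    simp [updateCol_ne hlj, Pi.single_apply, one_apply]

theorem det_updateCol_adjugate_pair (A : Matrix ι ι R) {i j : ι} (hij : i ≠ j) :
    (((1 : Matrix ι ι R).updateCol i (fun k => adjugate A k i)).updateCol j
        (fun k => adjugate A k j)).det =
      adjugate A i i * adjugate A j j - adjugate A i j * adjugate A j i := by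
  have hinj : Function.Injective ![i, j] := by
    intro a b
    fin_cases a <;> fin_cases b <;> simp [hij, hij.symm]
  rw [det_eq_det_toSquareBlockProp_of_col_eq_one _ {i, j}]
  · let e : Fin 2 ≃ {l // l ∈ ({i, j} : Finset ι)} :=
      (Equiv.ofInjective _ hinj).trans (Equiv.subtypeEquivRight (by simp [or_comm, eq_comm]))
    rw [← det_submatrix_equiv_self e, det_fin_two]
    simp [e, toSquareBlockProp, toBlock, hij]
  · intro k l hl
    simp only [Finset.mem_insert, Finset.mem_singleton, not_or] at hl
    rw [updateCol_ne hl.2, updateCol_ne hl.1]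

theorem mul_updateCol_adjugate_pair (A : Matrix ι ι R) (i j : ι) :
    A * ((1 : Matrix ι ι R).updateCol i (fun k => adjugate A k i)).updateCol j
        (fun k => adjugate A k j) =
      (A.updateCol i (A.det • Pi.single i 1)).updateCol j (A.det • Pi.single j 1) := by
  have hcol : ∀ l, A *ᵥ (fun k => adjugate A k l) = A.det • Pi.single l 1 := by
    intro l
    ext k
    simpa [mulVec, dotProduct, ← mul_apply, one_apply, Pi.single_apply, eq_comm]
      using congrFun (congrFun (mul_adjugate A) k) l
  rw [mul_updateCol, mul_updateCol, mul_one, hcol, hcol]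

theorem det_mul_det_mul_det_toSquareBlockProp_compl_pair (A : Matrix ι ι R) {i j : ι}
    (hij : i ≠ j) :
    A.det * (A.det * (A.toSquareBlockProp (· ∈ ({i, j} : Finset ι)ᶜ)).det) =
      A.det * (adjugate A i i * adjugate A j j - adjugate A i j * adjugate A j i) := by
  -- Both sides are `det (A * C)`, where `C` is `1` with columns `i`, `j` taken from `adjugate A`.
  rw [← det_updateCol_adjugate_pair A hij, ← det_mul, mul_updateCol_adjugate_pair,
    det_updateCol_smul, updateCol_comm _ hij, det_updateCol_smul, updateCol_comm _ hij.symm,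
    det_updateCol_single_pair]

theorem det_mul_det_toSquareBlockProp_compl_pair (A : Matrix ι ι R) {i j : ι} (hij : i ≠ j) :
    A.det * (A.toSquareBlockProp (· ∈ ({i, j} : Finset ι)ᶜ)).det =
      adjugate A i i * adjugate A j j - adjugate A i j * adjugate A j i := by
  -- `det A` may be a zero divisor: cancel it for the generic matrix, then specialize.
  let X := mvPolynomialX ι ι ℤ
  have generic := mul_left_cancel₀ (det_mvPolynomialX_ne_zero ι ℤ)
    (det_mul_det_mul_det_toSquareBlockProp_compl_pair X hij)
  let φ := MvPolynomial.eval₂Hom (Int.castRingHom R) fun p : ι × ι => A p.1 p.2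
  have hφ : φ.mapMatrix X = A := mvPolynomialX_map_eval₂ _ A
  have hadj (a b : ι) : φ (adjugate X a b) = adjugate A a b := by
    rw [← hφ, ← RingHom.map_adjugate]
    rfl
  have hblock : φ.mapMatrix (X.toSquareBlockProp (· ∈ ({i, j} : Finset ι)ᶜ)) =
      A.toSquareBlockProp (· ∈ ({i, j} : Finset ι)ᶜ) := by
    rw [← hφ]
    rfl
  have := congrArg φ generic
  rwa [map_mul, map_sub, map_mul, map_mul, hadj, hadj, hadj, hadj, RingHom.map_det,
    RingHom.map_det, hφ, hblock] at this

theorem det_eq_zero_of_transpose_eq_neg_of_odd (A : Matrix ι ι R)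
    (hcard : Odd (Fintype.card ι)) (hA : Aᵀ = -A) (hdiag : ∀ k, A k k = 0) : A.det = 0 := by
  -- Without 2-torsion-freeness `det A = -det A` is not enough, so argue for the generic
  -- alternating matrix `X - Xᵀ` over `ℤ[X]` and specialize `X (a, b)` to `A a b` for `a < b`.
  let _ : LinearOrder ι := LinearOrder.lift' (Fintype.equivFin ι) (Fintype.equivFin ι).injective
  let X := mvPolynomialX ι ι ℤ
  have generic : (X - Xᵀ).det = 0 := by
    refine self_eq_neg.mp ?_
    conv_lhs => rw [← det_transpose, transpose_sub, transpose_transpose, ← neg_sub, det_neg,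
      hcard.neg_one_pow, neg_one_mul]
  let φ := MvPolynomial.aeval (R := ℤ) fun p : ι × ι => if p.1 < p.2 then A p.1 p.2 else 0
  have hφ : φ.mapMatrix (X - Xᵀ) = A := by
    ext a b
    have hba : A b a = -A a b := by simpa using congrFun (congrFun hA a) b
    rcases lt_trichotomy a b with h | rfl | h
    · simp [X, φ, h, h.not_gt]
    · simp [X, hdiag]
    · simp [X, φ, h, h.not_gt, hba]
  rw [← hφ, ← AlgHom.map_det, generic, map_zero]

theorem adjugate_transpose_eq_neg_of_even (A : Matrix ι ι R) (hcard : Even (Fintype.card ι))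
    (hA : Aᵀ = -A) : (adjugate A)ᵀ = -adjugate A := by
  rcases (Fintype.card ι).eq_zero_or_pos with h | h
  · have := Fintype.card_eq_zero_iff.mp h
    exact Subsingleton.elim _ _
  have hodd : Odd (Fintype.card ι - 1) := Nat.Even.sub_odd h hcard odd_one
  rw [adjugate_transpose, hA, ← neg_one_smul R A, adjugate_smul, hodd.neg_one_pow, neg_one_smul]

end

section
variable {R : Type*} [CommRing R]

theorem minor2_self_eq_det_toSquareBlockProp {n : ℕ} (A : Matrix (Fin n) (Fin n) R) {i j : Fin n}
    (hij : i ≠ j) :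
    minor2 A i j i j hij hij = (A.toSquareBlockProp (· ∈ ({i, j} : Finset (Fin n))ᶜ)).det := by
  rw [minor2, ← det_submatrix_equiv_self (Finset.orderIsoOfFin _
    (by rw [Finset.card_compl, Finset.card_pair hij, Fintype.card_fin])).toEquiv]
  rfl

theorem adjugate_eq_neg_one_pow_mul_minor1 {k : ℕ} (A : Matrix (Fin (k + 1)) (Fin (k + 1)) R)
    (p q : Fin (k + 1)) : adjugate A p q = (-1) ^ (p + q : ℕ) * minor1 A q p := by
  rw [adjugate_fin_succ_eq_det_submatrix, minor1, add_comm]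
  simp only [Finset.orderEmbOfFin_compl_singleton_apply]
  rfl

theorem adjugate_apply_self_eq_zero_of_odd {k : ℕ} (hk : Odd k)
    (A : Matrix (Fin (k + 1)) (Fin (k + 1)) R) (hA : Aᵀ = -A) (hdiag : ∀ l, A l l = 0)
    (p : Fin (k + 1)) : adjugate A p p = 0 := by
  rw [adjugate_fin_succ_eq_det_submatrix, det_eq_zero_of_transpose_eq_neg_of_odd, mul_zero]
  · simpa using hk
  · ext a b
    simpa using congrFun (congrFun hA (p.succAbove a)) (p.succAbove b)
  · exact fun l => hdiag _

theorem minor2_mul_det_eq_minor1_sq_of_even {n : ℕ} (hn : Even n)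
    (A : Matrix (Fin n) (Fin n) R) (hA : Aᵀ = -A) (hdiag : ∀ l, A l l = 0)
    {i j : Fin n} (hij : i ≠ j) :
    minor2 A i j i j hij hij * A.det = minor1 A i j ^ 2 := by
  obtain ⟨k, rfl⟩ := Nat.exists_eq_add_one_of_ne_zero i.pos.ne'
  have hk : Odd k := Nat.not_even_iff_odd.mp (Nat.even_add_one.mp hn)
  have hskew : adjugate A j i = -adjugate A i j := by
    simpa using congrFun (congrFun (adjugate_transpose_eq_neg_of_even A (by simpa) hA) i) j
  calc minor2 A i j i j hij hij * A.det
      = adjugate A i i * adjugate A j j - adjugate A i j * adjugate A j i := by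
        rw [minor2_self_eq_det_toSquareBlockProp, mul_comm,
          det_mul_det_toSquareBlockProp_compl_pair A hij]
    _ = adjugate A j i ^ 2 := by
        rw [adjugate_apply_self_eq_zero_of_odd hk A hA hdiag, hskew]
        ring
    _ = minor1 A i j ^ 2 := by
        rw [adjugate_eq_neg_one_pow_mul_minor1, mul_pow, ← pow_mul, pow_mul', neg_one_sq,
          one_pow, one_mul]

end

theorem alternating_jacobi_square_general {R : Type*} [CommRing R] {m : ℕ}
    (A : Matrix (Fin (2 * m)) (Fin (2 * m)) R)
    (hAlt : Aᵀ = -A) (hDiag : ∀ i, A i i = 0)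
    (i j : Fin (2 * m)) (hij : i ≠ j) :
    minor2 A i j i j hij hij * A.det = (minor1 A i j) ^ 2 :=
  minor2_mul_det_eq_minor1_sq_of_even (even_two_mul m) A hAlt hDiag hij

/-- For an alternating `2m × 2m` matrix `A` (i.e. `Aᵀ = −A` with zero diagonal) and
distinct indices `i`, `j`, one has `det(A^{ij}_{ij}) · det A = (det A_{î ĵ})²`. -/
theorem alternating_jacobi_square {R : Type*} [CommRing R] {m : ℕ} (hm : 1 ≤ m)
    (A : Matrix (Fin (2 * m)) (Fin (2 * m)) R)
    (hAlt : Aᵀ = -A) (hDiag : ∀ i, A i i = 0)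
    (i j : Fin (2 * m)) (hij : i ≠ j) :
    minor2 A i j i j hij hij * A.det = (minor1 A i j) ^ 2 :=
  alternating_jacobi_square_general A hAlt hDiag i j hij
end
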